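/- Let U ⊆ (ℂ∖{0})² be open with coordinates (q₁,q₂), and let F, x, y be holomorphic nonvanishing functions on U with Δ = G_{x,1}G_{y,2} − G_{x,2}G_{y,1} nonvanishing and G_{x,1}²G_{y,2}² − G_{y,1}²G_{x,2}² nonvanishing on U. Then on U the identity D_y²F + b₀·D_xD_yF + b₁·D_xF + b₂·D_yF + b₃·F = 0 holds, where b₀ = 2G_{x,1}G_{x,2}/(G_{x,1}G_{y,2} + G_{y,1}G_{x,2}), b₁ = (−G_{x,2}²(D_{q₁}G_{x,1} − 2G_{F,1}G_{x,1}) + G_{x,1}²(D_{q₂}G_{x,2} − 2G_{F,2}G_{x,2}))/(G_{x,1}²G_{y,2}² − G_{y,1}²G_{x,2}²), b₂ = (−G_{x,2}²(D_{q₁}G_{y,1} − 2G_{F,1}G_{y,1}) + G_{x,1}²(D_{q₂}G_{y,2} − 2G_{F,2}G_{y,2}))/(G_{x,1}²G_{y,2}² − G_{y,1}²G_{x,2}²), and b₃ = −(−G_{x,2}²(D_{q₁}G_{F,1} − G_{F,1}²) + G_{x,1}²(D_{q₂}G_{F,2} − G_{F,2}²))/(G_{x,1}²G_{y,2}² − G_{y,1}²G_{x,2}²).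 -/

import Mathlib

/-!
The operators `D_{q₁}`, `D_{q₂}` are derivations, so `D_{q_j}(Δ_x/Δ)` and `D_{q_j}(Δ_y/Δ)` expand,
by the quotient and product rules, into the `G_{t,i}` and their first derivatives. The mixed
derivatives `D_{q₂}G_{t,1}` and `D_{q₁}G_{t,2}` agree, because `D_{q₁}` and `D_{q₂}` commute on
holomorphic functions (symmetry of the second derivative). What remains is an identity of rational
functions with denominators `Δ` and `G_{x,1}G_{y,2} + G_{y,1}G_{x,2}`, whose product is the
nonvanishing `G_{x,1}²G_{y,2}² − G_{y,1}²G_{x,2}²`.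
-/

open Complex

/-- `D_{q₁}t = q₁ ∂t/∂q₁` for a function `t` of `(q₁, q₂)`. -/
noncomputable def Dq1 (f : ℂ × ℂ → ℂ) : ℂ × ℂ → ℂ :=
  fun p => p.1 * deriv (fun z => f (z, p.2)) p.1

/-- `D_{q₂}t = q₂ ∂t/∂q₂` for a function `t` of `(q₁, q₂)`. -/
noncomputable def Dq2 (f : ℂ × ℂ → ℂ) : ℂ × ℂ → ℂ :=
  fun p => p.2 * deriv (fun z => f (p.1, z)) p.2

/-- `G_{t,1} = D_{q₁}t / t`. -/
noncomputable def G1 (f : ℂ × ℂ → ℂ) : ℂ × ℂ → ℂ := fun p => Dq1 f p / f p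

/-- `G_{t,2} = D_{q₂}t / t`. -/
noncomputable def G2 (f : ℂ × ℂ → ℂ) : ℂ × ℂ → ℂ := fun p => Dq2 f p / f p

/-- `Δ = G_{x,1}G_{y,2} − G_{x,2}G_{y,1}`. -/
noncomputable def Del (x y : ℂ × ℂ → ℂ) : ℂ × ℂ → ℂ :=
  fun p => G1 x p * G2 y p - G2 x p * G1 y p

/-- `Δ_x = G_{F,1}G_{y,2} − G_{F,2}G_{y,1}`. -/
noncomputable def DelX (F y : ℂ × ℂ → ℂ) : ℂ × ℂ → ℂ :=
  fun p => G1 F p * G2 y p - G2 F p * G1 y p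

/-- `Δ_y = −G_{x,2}G_{F,1} + G_{x,1}G_{F,2}`. -/
noncomputable def DelY (F x : ℂ × ℂ → ℂ) : ℂ × ℂ → ℂ :=
  fun p => -(G2 x p * G1 F p) + G1 x p * G2 F p

/-- `Δ_x/Δ`. -/
noncomputable def RX (F x y : ℂ × ℂ → ℂ) : ℂ × ℂ → ℂ :=
  fun p => DelX F y p / Del x y p

/-- `Δ_y/Δ`. -/
noncomputable def RY (F x y : ℂ × ℂ → ℂ) : ℂ × ℂ → ℂ :=
  fun p => DelY F x p / Del x y p

/-- `D_xF = F·Δ_x/Δ`. -/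
noncomputable def DX (F x y : ℂ × ℂ → ℂ) : ℂ × ℂ → ℂ :=
  fun p => F p * DelX F y p / Del x y p

/-- `D_yF = F·Δ_y/Δ`. -/
noncomputable def DY (F x y : ℂ × ℂ → ℂ) : ℂ × ℂ → ℂ :=
  fun p => F p * DelY F x p / Del x y p

/-- `D_x²F = F·Δ_x²/Δ² + (F/Δ)(G_{y,2}·D_{q₁}(Δ_x/Δ) − G_{y,1}·D_{q₂}(Δ_x/Δ))`. -/
noncomputable def DXX (F x y : ℂ × ℂ → ℂ) : ℂ × ℂ → ℂ :=
  fun p => F p * (DelX F y p) ^ 2 / (Del x y p) ^ 2 +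
    F p / Del x y p *
      (G2 y p * Dq1 (RX F x y) p - G1 y p * Dq2 (RX F x y) p)

/-- `D_xD_yF = F·Δ_xΔ_y/Δ² + (F/Δ)(−G_{x,2}·D_{q₁}(Δ_x/Δ) + G_{x,1}·D_{q₂}(Δ_x/Δ))`. -/
noncomputable def DXY (F x y : ℂ × ℂ → ℂ) : ℂ × ℂ → ℂ :=
  fun p => F p * DelX F y p * DelY F x p / (Del x y p) ^ 2 +
    F p / Del x y p *
      (-(G2 x p) * Dq1 (RX F x y) p + G1 x p * Dq2 (RX F x y) p)

/-- `D_y²F = F·Δ_y²/Δ² + (F/Δ)(−G_{x,2}·D_{q₁}(Δ_y/Δ) + G_{x,1}·D_{q₂}(Δ_y/Δ))`. -/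
noncomputable def DYY (F x y : ℂ × ℂ → ℂ) : ℂ × ℂ → ℂ :=
  fun p => F p * (DelY F x p) ^ 2 / (Del x y p) ^ 2 +
    F p / Del x y p *
      (-(G2 x p) * Dq1 (RY F x y) p + G1 x p * Dq2 (RY F x y) p)

open Topology

section EulerOperators

variable {f g t : ℂ × ℂ → ℂ} {p : ℂ × ℂ}

theorem DifferentiableAt.hasDerivAt_slice_fst (hf : DifferentiableAt ℂ f p) :
    HasDerivAt (fun z => f (z, p.2)) (fderiv ℂ f p (1, 0)) p.1 :=
  hf.hasFDerivAt.comp_hasDerivAt p.1 ((hasDerivAt_id p.1).prodMk (hasDerivAt_const p.1 p.2))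

theorem DifferentiableAt.hasDerivAt_slice_snd (hf : DifferentiableAt ℂ f p) :
    HasDerivAt (fun z => f (p.1, z)) (fderiv ℂ f p (0, 1)) p.2 :=
  hf.hasFDerivAt.comp_hasDerivAt p.2 ((hasDerivAt_const p.2 p.1).prodMk (hasDerivAt_id p.2))

theorem Dq1_eq_fderiv (hf : DifferentiableAt ℂ f p) : Dq1 f p = p.1 * fderiv ℂ f p (1, 0) := by
  rw [Dq1, hf.hasDerivAt_slice_fst.deriv]

theorem Dq2_eq_fderiv (hf : DifferentiableAt ℂ f p) : Dq2 f p = p.2 * fderiv ℂ f p (0, 1) := by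
  rw [Dq2, hf.hasDerivAt_slice_snd.deriv]

theorem Dq1_mul (hf : DifferentiableAt ℂ f p) (hg : DifferentiableAt ℂ g p) :
    Dq1 (f * g) p = Dq1 f p * g p + f p * Dq1 g p := by
  simp only [Dq1, Pi.mul_apply, (hf.hasDerivAt_slice_fst.fun_mul hg.hasDerivAt_slice_fst).deriv,
    hf.hasDerivAt_slice_fst.deriv, hg.hasDerivAt_slice_fst.deriv]
  ring

theorem Dq2_mul (hf : DifferentiableAt ℂ f p) (hg : DifferentiableAt ℂ g p) :
    Dq2 (f * g) p = Dq2 f p * g p + f p * Dq2 g p := by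
  simp only [Dq2, Pi.mul_apply, (hf.hasDerivAt_slice_snd.fun_mul hg.hasDerivAt_slice_snd).deriv,
    hf.hasDerivAt_slice_snd.deriv, hg.hasDerivAt_slice_snd.deriv]
  ring

theorem Dq1_sub (hf : DifferentiableAt ℂ f p) (hg : DifferentiableAt ℂ g p) :
    Dq1 (f - g) p = Dq1 f p - Dq1 g p := by
  simp only [Dq1, Pi.sub_apply, (hf.hasDerivAt_slice_fst.fun_sub hg.hasDerivAt_slice_fst).deriv,
    hf.hasDerivAt_slice_fst.deriv, hg.hasDerivAt_slice_fst.deriv]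
  ring

theorem Dq2_sub (hf : DifferentiableAt ℂ f p) (hg : DifferentiableAt ℂ g p) :
    Dq2 (f - g) p = Dq2 f p - Dq2 g p := by
  simp only [Dq2, Pi.sub_apply, (hf.hasDerivAt_slice_snd.fun_sub hg.hasDerivAt_slice_snd).deriv,
    hf.hasDerivAt_slice_snd.deriv, hg.hasDerivAt_slice_snd.deriv]
  ring

theorem Dq1_div (hf : DifferentiableAt ℂ f p) (hg : DifferentiableAt ℂ g p) (hg0 : g p ≠ 0) :
    Dq1 (f / g) p = (Dq1 f p * g p - f p * Dq1 g p) / g p ^ 2 := by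
  simp only [Dq1, Pi.div_apply, (hf.hasDerivAt_slice_fst.fun_div hg.hasDerivAt_slice_fst hg0).deriv,
    hf.hasDerivAt_slice_fst.deriv, hg.hasDerivAt_slice_fst.deriv]
  field_simp

theorem Dq2_div (hf : DifferentiableAt ℂ f p) (hg : DifferentiableAt ℂ g p) (hg0 : g p ≠ 0) :
    Dq2 (f / g) p = (Dq2 f p * g p - f p * Dq2 g p) / g p ^ 2 := by
  simp only [Dq2, Pi.div_apply, (hf.hasDerivAt_slice_snd.fun_div hg.hasDerivAt_slice_snd hg0).deriv,
    hf.hasDerivAt_slice_snd.deriv, hg.hasDerivAt_slice_snd.deriv]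
  field_simp

theorem AnalyticAt.Dq1_eventuallyEq (ht : AnalyticAt ℂ t p) :
    Dq1 t =ᶠ[𝓝 p] fun q => q.1 * fderiv ℂ t q (1, 0) :=
  ht.eventually_analyticAt.mono fun _ hq => Dq1_eq_fderiv hq.differentiableAt

theorem AnalyticAt.Dq2_eventuallyEq (ht : AnalyticAt ℂ t p) :
    Dq2 t =ᶠ[𝓝 p] fun q => q.2 * fderiv ℂ t q (0, 1) :=
  ht.eventually_analyticAt.mono fun _ hq => Dq2_eq_fderiv hq.differentiableAt

theorem AnalyticAt.fderiv_apply (ht : AnalyticAt ℂ t p) (v : ℂ × ℂ) :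
    AnalyticAt ℂ (fun q => fderiv ℂ t q v) p :=
  ((ContinuousLinearMap.apply ℂ ℂ v).analyticAt _).comp ht.fderiv

theorem AnalyticAt.Dq1 (ht : AnalyticAt ℂ t p) : AnalyticAt ℂ (Dq1 t) p :=
  (analyticAt_fst.fun_mul (ht.fderiv_apply _)).congr ht.Dq1_eventuallyEq.symm

theorem AnalyticAt.Dq2 (ht : AnalyticAt ℂ t p) : AnalyticAt ℂ (Dq2 t) p :=
  (analyticAt_snd.fun_mul (ht.fderiv_apply _)).congr ht.Dq2_eventuallyEq.symm

theorem Dq2_Dq1_comm (ht : AnalyticAt ℂ t p) : Dq2 (Dq1 t) p = Dq1 (Dq2 t) p := by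
  have hsymm : fderiv ℂ (fderiv ℂ t) p (0, 1) (1, 0) = fderiv ℂ (fderiv ℂ t) p (1, 0) (0, 1) :=
    (ht.contDiffAt (n := 2)).isSymmSndFDerivAt (by simp) _ _
  rw [Dq2_eq_fderiv ht.Dq1.differentiableAt, Dq1_eq_fderiv ht.Dq2.differentiableAt,
    ht.Dq1_eventuallyEq.fderiv_eq, ht.Dq2_eventuallyEq.fderiv_eq,
    fderiv_fun_mul differentiableAt_fst (ht.fderiv_apply _).differentiableAt,
    fderiv_fun_mul differentiableAt_snd (ht.fderiv_apply _).differentiableAt,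
    fderiv_clm_apply ht.fderiv.differentiableAt (differentiableAt_const _),
    fderiv_clm_apply ht.fderiv.differentiableAt (differentiableAt_const _)]
  simp only [fderiv_fun_const, Pi.zero_apply, ContinuousLinearMap.comp_zero, zero_add, fderiv_fst,
    add_apply, smul_apply, ContinuousLinearMap.flip_apply, hsymm, smul_eq_mul,
    ContinuousLinearMap.coe_fst', mul_zero, add_zero, fderiv_snd, ContinuousLinearMap.coe_snd']
  ring

end EulerOperators

section LogarithmicDerivatives

variable {t u v : ℂ × ℂ → ℂ} {p : ℂ × ℂ}

theorem AnalyticAt.G1 (ht : AnalyticAt ℂ t p) (ht0 : t p ≠ 0) : AnalyticAt ℂ (G1 t) p :=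
  ht.Dq1.div ht ht0

theorem AnalyticAt.G2 (ht : AnalyticAt ℂ t p) (ht0 : t p ≠ 0) : AnalyticAt ℂ (G2 t) p :=
  ht.Dq2.div ht ht0

theorem Dq2_G1_eq_Dq1_G2 (ht : AnalyticAt ℂ t p) (ht0 : t p ≠ 0) :
    Dq2 (G1 t) p = Dq1 (G2 t) p := by
  rw [show G1 t = Dq1 t / t from rfl, show G2 t = Dq2 t / t from rfl,
    Dq2_div ht.Dq1.differentiableAt ht.differentiableAt ht0,
    Dq1_div ht.Dq2.differentiableAt ht.differentiableAt ht0, Dq2_Dq1_comm ht]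
  ring

theorem Del_eq_sub : Del u v = G1 u * G2 v - G2 u * G1 v := rfl

theorem AnalyticAt.Del (hu : AnalyticAt ℂ u p) (hv : AnalyticAt ℂ v p) (hu0 : u p ≠ 0)
    (hv0 : v p ≠ 0) : AnalyticAt ℂ (Del u v) p :=
  ((hu.G1 hu0).mul (hv.G2 hv0)).sub ((hu.G2 hu0).mul (hv.G1 hv0))

theorem Dq1_Del (hu : AnalyticAt ℂ u p) (hv : AnalyticAt ℂ v p) (hu0 : u p ≠ 0)
    (hv0 : v p ≠ 0) :
    Dq1 (Del u v) p = Dq1 (G1 u) p * G2 v p + G1 u p * Dq1 (G2 v) p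
      - (Dq1 (G2 u) p * G1 v p + G2 u p * Dq1 (G1 v) p) := by
  have h1u := (hu.G1 hu0).differentiableAt
  have h2u := (hu.G2 hu0).differentiableAt
  have h1v := (hv.G1 hv0).differentiableAt
  have h2v := (hv.G2 hv0).differentiableAt
  rw [Del_eq_sub, Dq1_sub (h1u.mul h2v) (h2u.mul h1v), Dq1_mul h1u h2v, Dq1_mul h2u h1v]

theorem Dq2_Del (hu : AnalyticAt ℂ u p) (hv : AnalyticAt ℂ v p) (hu0 : u p ≠ 0)
    (hv0 : v p ≠ 0) :
    Dq2 (Del u v) p = Dq1 (G2 u) p * G2 v p + G1 u p * Dq2 (G2 v) p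
      - (Dq2 (G2 u) p * G1 v p + G2 u p * Dq1 (G2 v) p) := by
  have h1u := (hu.G1 hu0).differentiableAt
  have h2u := (hu.G2 hu0).differentiableAt
  have h1v := (hv.G1 hv0).differentiableAt
  have h2v := (hv.G2 hv0).differentiableAt
  rw [Del_eq_sub, Dq2_sub (h1u.mul h2v) (h2u.mul h1v), Dq2_mul h1u h2v, Dq2_mul h2u h1v,
    Dq2_G1_eq_Dq1_G2 hu hu0, Dq2_G1_eq_Dq1_G2 hv hv0]

theorem DelY_eq_Del {F x : ℂ × ℂ → ℂ} : DelY F x = Del x F :=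
  funext fun _ => by simp only [DelY, Del]; ring

theorem RX_eq_div {F x y : ℂ × ℂ → ℂ} : RX F x y = Del F y / Del x y := rfl

theorem RY_eq_div {F x y : ℂ × ℂ → ℂ} : RY F x y = Del x F / Del x y := by
  rw [← DelY_eq_Del]; rfl

end LogarithmicDerivatives

theorem stmt1_general
    (U : Set (ℂ × ℂ))
    (F x y : ℂ × ℂ → ℂ)
    (hF : AnalyticOnNhd ℂ F U) (hx : AnalyticOnNhd ℂ x U) (hy : AnalyticOnNhd ℂ y U)
    (hFne : ∀ p ∈ U, F p ≠ 0) (hxne : ∀ p ∈ U, x p ≠ 0) (hyne : ∀ p ∈ U, y p ≠ 0)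
    (hden : ∀ p ∈ U, (G1 x p) ^ 2 * (G2 y p) ^ 2 - (G1 y p) ^ 2 * (G2 x p) ^ 2 ≠ 0) :
    ∀ p ∈ U,
      DYY F x y p
      + (2 * G1 x p * G2 x p / (G1 x p * G2 y p + G1 y p * G2 x p)) * DXY F x y p
      + ((-((G2 x p) ^ 2) * (Dq1 (G1 x) p - 2 * G1 F p * G1 x p)
          + (G1 x p) ^ 2 * (Dq2 (G2 x) p - 2 * G2 F p * G2 x p)) /
          ((G1 x p) ^ 2 * (G2 y p) ^ 2 - (G1 y p) ^ 2 * (G2 x p) ^ 2)) * DX F x y p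
      + ((-((G2 x p) ^ 2) * (Dq1 (G1 y) p - 2 * G1 F p * G1 y p)
          + (G1 x p) ^ 2 * (Dq2 (G2 y) p - 2 * G2 F p * G2 y p)) /
          ((G1 x p) ^ 2 * (G2 y p) ^ 2 - (G1 y p) ^ 2 * (G2 x p) ^ 2)) * DY F x y p
      + (-((-((G2 x p) ^ 2) * (Dq1 (G1 F) p - (G1 F p) ^ 2)
          + (G1 x p) ^ 2 * (Dq2 (G2 F) p - (G2 F p) ^ 2)) /
          ((G1 x p) ^ 2 * (G2 y p) ^ 2 - (G1 y p) ^ 2 * (G2 x p) ^ 2))) * F p = 0 := by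
  intro p hp
  have hfac : G1 x p ^ 2 * G2 y p ^ 2 - G1 y p ^ 2 * G2 x p ^ 2
      = Del x y p * (G1 x p * G2 y p + G1 y p * G2 x p) := by
    rw [Del]; ring
  obtain ⟨hΔ, hS⟩ := mul_ne_zero_iff.mp (hfac ▸ hden p hp)
  have hFa := hF p hp
  have hxa := hx p hp
  have hya := hy p hp
  have hF0 := hFne p hp
  have hx0 := hxne p hp
  have hy0 := hyne p hp
  have hΔd := (hxa.Del hya hx0 hy0).differentiableAt
  have hΔxd := (hFa.Del hya hF0 hy0).differentiableAt
  have hΔyd := (hxa.Del hFa hx0 hF0).differentiableAt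
  simp only [DYY, DXY, DX, DY]
  rw [RX_eq_div, RY_eq_div, Dq1_div hΔxd hΔd hΔ, Dq2_div hΔxd hΔd hΔ, Dq1_div hΔyd hΔd hΔ,
    Dq2_div hΔyd hΔd hΔ,
    Dq1_Del hFa hya hF0 hy0, Dq2_Del hFa hya hF0 hy0, Dq1_Del hxa hFa hx0 hF0,
    Dq2_Del hxa hFa hx0 hF0, Dq1_Del hxa hya hx0 hy0, Dq2_Del hxa hya hx0 hy0, hfac]
  -- as an atom, `S` is cleared by `field_simp` using `hS`; expanded, it would not be recognised
  set S := G1 x p * G2 y p + G1 y p * G2 x p with hS_def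
  field_simp
  simp only [DelX, DelY, Del, hS_def]
  ring

theorem stmt1
    (U : Set (ℂ × ℂ)) (hUopen : IsOpen U)
    (hU : ∀ p ∈ U, p.1 ≠ 0 ∧ p.2 ≠ 0)
    (F x y : ℂ × ℂ → ℂ)
    (hF : AnalyticOnNhd ℂ F U) (hx : AnalyticOnNhd ℂ x U) (hy : AnalyticOnNhd ℂ y U)
    (hFne : ∀ p ∈ U, F p ≠ 0) (hxne : ∀ p ∈ U, x p ≠ 0) (hyne : ∀ p ∈ U, y p ≠ 0)
    (hΔ : ∀ p ∈ U, Del x y p ≠ 0)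
    (hden : ∀ p ∈ U, (G1 x p) ^ 2 * (G2 y p) ^ 2 - (G1 y p) ^ 2 * (G2 x p) ^ 2 ≠ 0) :
    ∀ p ∈ U,
      DYY F x y p
      + (2 * G1 x p * G2 x p / (G1 x p * G2 y p + G1 y p * G2 x p)) * DXY F x y p
      + ((-((G2 x p) ^ 2) * (Dq1 (G1 x) p - 2 * G1 F p * G1 x p)
          + (G1 x p) ^ 2 * (Dq2 (G2 x) p - 2 * G2 F p * G2 x p)) /
          ((G1 x p) ^ 2 * (G2 y p) ^ 2 - (G1 y p) ^ 2 * (G2 x p) ^ 2)) * DX F x y p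
      + ((-((G2 x p) ^ 2) * (Dq1 (G1 y) p - 2 * G1 F p * G1 y p)
          + (G1 x p) ^ 2 * (Dq2 (G2 y) p - 2 * G2 F p * G2 y p)) /
          ((G1 x p) ^ 2 * (G2 y p) ^ 2 - (G1 y p) ^ 2 * (G2 x p) ^ 2)) * DY F x y p
      + (-((-((G2 x p) ^ 2) * (Dq1 (G1 F) p - (G1 F p) ^ 2)
          + (G1 x p) ^ 2 * (Dq2 (G2 F) p - (G2 F p) ^ 2)) /
          ((G1 x p) ^ 2 * (G2 y p) ^ 2 - (G1 y p) ^ 2 * (G2 x p) ^ 2))) * F p = 0 :=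
  stmt1_general U F x y hF hx hy hFne hxne hyne hden
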